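/- arXiv:2002.07370 — 4 statements merged into one kernel-verified Lean document; each statement's English description precedes it below -/
import Mathlib

section
/- (Cone decomposition for group lasso) Suppose b̂ minimizes L(b) + λ‖b‖_{1,2} where L is convex, and let b* have group support S (i.e., (b*_j, b*_{j+p}) = 0 for j ∉ S). If the subgradient bound sup{⟨g, δ⟩ : g ∈ ∂L(b*)} ≤ (λ/2)‖δ‖_{1,2} holds for all δ, then the error δ = b̂ - b* satisfies ‖δ_{S^c}‖_{1,2} ≤ 3‖δ_S‖_{1,2}. -/
open Finset

/-- The group `ℓ_{1,2}` norm on `ℝ^{2p}`, pairing coordinates `j` and `j+p`. -/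
noncomputable def groupNorm12 (p : ℕ) (b : Fin (2 * p) → ℝ) : ℝ :=
  ∑ j : Fin p, Real.sqrt ((b ⟨j.1, by have := j.2; omega⟩) ^ 2
    + (b ⟨j.1 + p, by have := j.2; omega⟩) ^ 2)

/-- Restriction of `b ∈ ℝ^{2p}` to the coordinate pairs indexed by `S`. -/
noncomputable def groupRestrict (p : ℕ) (hp : 0 < p) (S : Finset (Fin p))
    (b : Fin (2 * p) → ℝ) : Fin (2 * p) → ℝ :=
  fun i => if (⟨i.1 % p, Nat.mod_lt _ hp⟩ : Fin p) ∈ S then b i else 0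

/-- The subdifferential of `L` at `bstar`. -/
def subGrad (p : ℕ) (L : (Fin (2 * p) → ℝ) → ℝ) (bstar : Fin (2 * p) → ℝ) :
    Set (Fin (2 * p) → ℝ) :=
  {g | ∀ x, L bstar + ∑ i, g i * (x i - bstar i) ≤ L x}

/-!
A convex `L` has a subgradient `g` at `b*`: by Hahn–Banach, extend `0` below the one-sided
directional derivative `v ↦ L'(b*; v)`, which is sublinear. Then `L(b̂) ≥ L(b*) + ⟨g, δ⟩`, the
score bound at `-δ` and the optimality of `b̂` against `b*` give `‖b̂‖ ≤ ‖b*‖ + ‖δ‖ / 2`, while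
the group support of `b*` gives `‖b̂‖ ≥ ‖b*‖ - ‖δ_S‖ + ‖δ_{Sᶜ}‖`. Since
`‖δ‖ = ‖δ_S‖ + ‖δ_{Sᶜ}‖`, this leaves `‖δ_{Sᶜ}‖ ≤ 3 ‖δ_S‖`.
-/

open Set

section OneSidedDirDeriv

variable {E : Type*} [AddCommGroup E] [Module ℝ E]

noncomputable def lineSlope (f : E → ℝ) (x v : E) (t : ℝ) : ℝ := (f (x + t • v) - f x) / t

/-- For convex `f` the slopes decrease as `t ↓ 0` (`ConvexOn.lineSlope_mono`), so this infimum is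
the one-sided directional derivative `f'(x; v)`. -/
noncomputable def oneSidedDirDeriv (f : E → ℝ) (x v : E) : ℝ :=
  ⨅ t : Ioi (0 : ℝ), lineSlope f x v t

variable {f : E → ℝ} {x v w : E}

lemma lineSlope_one : lineSlope f x v 1 = f (x + v) - f x := by
  simp [lineSlope]

lemma lineSlope_zero_right (t : ℝ) : lineSlope f x 0 t = 0 := by
  simp [lineSlope]

lemma lineSlope_smul {c : ℝ} (hc : c ≠ 0) (t : ℝ) :
    lineSlope f x (c • v) t = c * lineSlope f x v (t * c) := by
  rw [lineSlope, lineSlope, smul_smul, mul_div, mul_comm c, mul_div_mul_right _ _ hc]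

namespace ConvexOn

lemma comp_line (hf : ConvexOn ℝ univ f) (x v : E) :
    ConvexOn ℝ univ fun t : ℝ => f (x + t • v) := by
  simpa [Function.comp_def, AffineMap.lineMap_apply, add_comm] using
    hf.comp_affineMap (AffineMap.lineMap x (x + v))

lemma lineSlope_mono (hf : ConvexOn ℝ univ f) {s t : ℝ} (hs : 0 < s) (hst : s ≤ t) :
    lineSlope f x v s ≤ lineSlope f x v t := by
  simpa [lineSlope] using (hf.comp_line x v).secant_mono (a := 0) trivial trivial trivial
    hs.ne' (hs.trans_le hst).ne' hst

lemma sub_le_lineSlope (hf : ConvexOn ℝ univ f) {t : ℝ} (ht : 0 < t) :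
    f x - f (x - v) ≤ lineSlope f x v t := by
  have h := (hf.comp_line x v).secant_mono (a := 0) (x := -1)
    trivial trivial trivial (by norm_num) ht.ne' (by linarith)
  simp only [zero_smul, add_zero, neg_one_smul, sub_zero, ← sub_eq_add_neg, div_neg, div_one,
    neg_sub] at h
  exact h

lemma lineSlope_add_le (hf : ConvexOn ℝ univ f) {t : ℝ} (ht : 0 < t) :
    lineSlope f x (v + w) (t / 2) ≤ lineSlope f x v t + lineSlope f x w t := by
  have hmid : x + (t / 2) • (v + w) = (1 / 2 : ℝ) • (x + t • v) + (1 / 2 : ℝ) • (x + t • w) := by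
    module
  have hconv : f (x + (t / 2) • (v + w))
      ≤ (1 / 2 : ℝ) • f (x + t • v) + (1 / 2 : ℝ) • f (x + t • w) :=
    hmid ▸ hf.2 (mem_univ _) (mem_univ _) (by norm_num) (by norm_num) (by norm_num)
  rw [smul_eq_mul, smul_eq_mul] at hconv
  rw [lineSlope, lineSlope, lineSlope, ← add_div, div_le_div_iff₀ (by positivity) ht]
  nlinarith

lemma bddBelow_range_lineSlope (hf : ConvexOn ℝ univ f) (x v : E) :
    BddBelow (range fun t : Ioi (0 : ℝ) => lineSlope f x v t) :=
  ⟨f x - f (x - v), by rintro _ ⟨t, rfl⟩; exact hf.sub_le_lineSlope t.2⟩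

lemma oneSidedDirDeriv_le_lineSlope (hf : ConvexOn ℝ univ f) {t : ℝ} (ht : 0 < t) :
    oneSidedDirDeriv f x v ≤ lineSlope f x v t :=
  ciInf_le (hf.bddBelow_range_lineSlope x v) ⟨t, ht⟩

lemma oneSidedDirDeriv_le_sub (hf : ConvexOn ℝ univ f) (x v : E) :
    oneSidedDirDeriv f x v ≤ f (x + v) - f x :=
  lineSlope_one (f := f) ▸ hf.oneSidedDirDeriv_le_lineSlope one_pos

lemma oneSidedDirDeriv_zero_right (f : E → ℝ) (x : E) : oneSidedDirDeriv f x 0 = 0 := by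
  simp [oneSidedDirDeriv, lineSlope_zero_right]

lemma oneSidedDirDeriv_smul (hf : ConvexOn ℝ univ f) {c : ℝ} (hc : 0 < c) (v : E) :
    oneSidedDirDeriv f x (c • v) = c * oneSidedDirDeriv f x v := by
  apply le_antisymm
  · rw [← div_le_iff₀' hc]
    refine le_ciInf fun t => ?_
    rw [div_le_iff₀' hc]
    calc oneSidedDirDeriv f x (c • v) ≤ lineSlope f x (c • v) (t / c) :=
          hf.oneSidedDirDeriv_le_lineSlope (div_pos t.2 hc)
      _ = c * lineSlope f x v t := by rw [lineSlope_smul hc.ne', div_mul_cancel₀ _ hc.ne']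
  · refine le_ciInf fun t => ?_
    rw [lineSlope_smul hc.ne']
    exact mul_le_mul_of_nonneg_left
      (hf.oneSidedDirDeriv_le_lineSlope (mul_pos t.2 hc)) hc.le

lemma oneSidedDirDeriv_add_le (hf : ConvexOn ℝ univ f) (v w : E) :
    oneSidedDirDeriv f x (v + w) ≤ oneSidedDirDeriv f x v + oneSidedDirDeriv f x w := by
  refine le_ciInf_add_ciInf fun s t => ?_
  have hr : 0 < min (s : ℝ) t := lt_min s.2 t.2
  calc oneSidedDirDeriv f x (v + w) ≤ lineSlope f x (v + w) (min (s : ℝ) t / 2) :=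
        hf.oneSidedDirDeriv_le_lineSlope (by positivity)
    _ ≤ lineSlope f x v (min (s : ℝ) t) + lineSlope f x w (min (s : ℝ) t) :=
        hf.lineSlope_add_le hr
    _ ≤ lineSlope f x v s + lineSlope f x w t :=
        add_le_add (hf.lineSlope_mono hr (min_le_left _ _))
          (hf.lineSlope_mono hr (min_le_right _ _))

theorem exists_linearMap_le_sub (hf : ConvexOn ℝ univ f) (x : E) :
    ∃ g : E →ₗ[ℝ] ℝ, ∀ v, g v ≤ f (x + v) - f x := by
  obtain ⟨g, -, hg⟩ := exists_extension_of_le_sublinear ⟨⊥, 0⟩ (oneSidedDirDeriv f x)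
    (fun c hc v => hf.oneSidedDirDeriv_smul hc v) hf.oneSidedDirDeriv_add_le
    (fun v => by simp [(Submodule.mem_bot ℝ).1 v.2, oneSidedDirDeriv_zero_right])
  exact ⟨g, fun v => (hg v).trans (hf.oneSidedDirDeriv_le_sub x v)⟩

end ConvexOn

end OneSidedDirDeriv

section GroupNorm

variable {p : ℕ}

noncomputable def pairNorm (p : ℕ) (v : Fin (2 * p) → ℝ) (j : Fin p) : ℝ :=
  Real.sqrt ((v ⟨j.1, by have := j.2; omega⟩) ^ 2 + (v ⟨j.1 + p, by have := j.2; omega⟩) ^ 2)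

lemma groupNorm12_eq_sum_pairNorm (v : Fin (2 * p) → ℝ) :
    groupNorm12 p v = ∑ j, pairNorm p v j := rfl

lemma pairNorm_sub_le (u v : Fin (2 * p) → ℝ) (j : Fin p) :
    pairNorm p (u - v) j ≤ pairNorm p u j + pairNorm p v j := by
  simpa [pairNorm, EuclideanSpace.norm_eq, Fin.sum_univ_two] using
    norm_sub_le !₂[u ⟨j.1, by omega⟩, u ⟨j.1 + p, by omega⟩]
      !₂[v ⟨j.1, by omega⟩, v ⟨j.1 + p, by omega⟩]

lemma pairNorm_sub_comm (u v : Fin (2 * p) → ℝ) (j : Fin p) :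
    pairNorm p (u - v) j = pairNorm p (v - u) j := by
  simp only [pairNorm, Pi.sub_apply, sub_sq_comm (u _)]

lemma groupNorm12_sub_comm (u v : Fin (2 * p) → ℝ) :
    groupNorm12 p (u - v) = groupNorm12 p (v - u) := by
  simp only [groupNorm12_eq_sum_pairNorm, pairNorm_sub_comm u v]

lemma pairNorm_groupRestrict (hp : 0 < p) (S : Finset (Fin p)) (v : Fin (2 * p) → ℝ)
    (j : Fin p) :
    pairNorm p (groupRestrict p hp S v) j = if j ∈ S then pairNorm p v j else 0 := by
  have hlo : (⟨j.1 % p, Nat.mod_lt _ hp⟩ : Fin p) = j := Fin.ext (Nat.mod_eq_of_lt j.2)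
  split_ifs with hj <;> simp [pairNorm, groupRestrict, hlo, hj]

lemma groupNorm12_groupRestrict (hp : 0 < p) (S : Finset (Fin p)) (v : Fin (2 * p) → ℝ) :
    groupNorm12 p (groupRestrict p hp S v) = ∑ j ∈ S, pairNorm p v j := by
  simp [groupNorm12_eq_sum_pairNorm, pairNorm_groupRestrict, Finset.sum_ite_mem]

lemma groupNorm12_eq_restrict_add_restrict_compl (hp : 0 < p) (S : Finset (Fin p))
    (v : Fin (2 * p) → ℝ) :
    groupNorm12 p v
      = groupNorm12 p (groupRestrict p hp S v) + groupNorm12 p (groupRestrict p hp Sᶜ v) := by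
  rw [groupNorm12_groupRestrict, groupNorm12_groupRestrict, Finset.sum_add_sum_compl,
    groupNorm12_eq_sum_pairNorm]

lemma groupNorm12_sub_restrict_add_restrict_compl_le (hp : 0 < p) {S : Finset (Fin p)}
    {bstar : Fin (2 * p) → ℝ}
    (hsupp : ∀ j ∉ S, pairNorm p bstar j = 0) (b : Fin (2 * p) → ℝ) :
    groupNorm12 p bstar - groupNorm12 p (groupRestrict p hp S (b - bstar))
      + groupNorm12 p (groupRestrict p hp Sᶜ (b - bstar)) ≤ groupNorm12 p b := by
  have hbstar : groupNorm12 p bstar = ∑ j ∈ S, pairNorm p bstar j := by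
    rw [groupNorm12_eq_sum_pairNorm]
    exact (Finset.sum_subset (Finset.subset_univ S) fun j _ hj => hsupp j hj).symm
  have hon : ∀ j ∈ S, pairNorm p bstar j - pairNorm p (b - bstar) j ≤ pairNorm p b j :=
    fun j _ => by simpa using pairNorm_sub_le b (b - bstar) j
  have hoff : ∀ j ∈ Sᶜ, pairNorm p (b - bstar) j ≤ pairNorm p b j :=
    fun j hj => by simpa [hsupp j (Finset.mem_compl.1 hj)] using pairNorm_sub_le b bstar j
  rw [hbstar, groupNorm12_groupRestrict, groupNorm12_groupRestrict, ← Finset.sum_sub_distrib,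
    groupNorm12_eq_sum_pairNorm, ← Finset.sum_add_sum_compl S]
  exact add_le_add (Finset.sum_le_sum hon) (Finset.sum_le_sum hoff)

end GroupNorm

lemma ConvexOn.subGrad_nonempty {p : ℕ} {L : (Fin (2 * p) → ℝ) → ℝ} (hL : ConvexOn ℝ univ L)
    (b : Fin (2 * p) → ℝ) : (subGrad p L b).Nonempty := by
  classical
  obtain ⟨g, hg⟩ := hL.exists_linearMap_le_sub b
  refine ⟨fun i => g fun j => if i = j then 1 else 0, fun x => ?_⟩
  have hgx := hg (x - b)
  rw [add_sub_cancel, g.pi_apply_eq_sum_univ] at hgx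
  simp only [Pi.sub_apply, smul_eq_mul] at hgx
  simp only [mul_comm (g _)]
  linarith

/-- Cone decomposition for the group lasso: if `b̂` minimizes
`L(b) + λ ‖b‖_{1,2}`, `b*` has group support `S`, and every subgradient `g`
of `L` at `b*` satisfies `⟨g, δ⟩ ≤ (λ/2) ‖δ‖_{1,2}` for all `δ`, then
`‖(b̂ - b*)_{Sᶜ}‖_{1,2} ≤ 3 ‖(b̂ - b*)_S‖_{1,2}`. -/
theorem group_lasso_cone_decomposition (p : ℕ) (hp : 0 < p)
    (L : (Fin (2 * p) → ℝ) → ℝ) (hL : ConvexOn ℝ Set.univ L)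
    (lam : ℝ) (hlam : 0 < lam)
    (bhat bstar : Fin (2 * p) → ℝ)
    (hmin : ∀ b, L bhat + lam * groupNorm12 p bhat ≤ L b + lam * groupNorm12 p b)
    (S : Finset (Fin p))
    (hsupp : ∀ j : Fin p, j ∉ S →
      bstar ⟨j.1, by have := j.2; omega⟩ = 0 ∧ bstar ⟨j.1 + p, by have := j.2; omega⟩ = 0)
    (hscore : ∀ δ : Fin (2 * p) → ℝ, ∀ g ∈ subGrad p L bstar,
      (∑ i, g i * δ i) ≤ (lam / 2) * groupNorm12 p δ) :
    groupNorm12 p (groupRestrict p hp Sᶜ (bhat - bstar))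
      ≤ 3 * groupNorm12 p (groupRestrict p hp S (bhat - bstar)) := by
  obtain ⟨g, hg⟩ := hL.subGrad_nonempty bstar
  have hbasic : lam * groupNorm12 p bhat
      ≤ lam * (groupNorm12 p bstar + groupNorm12 p (bhat - bstar) / 2) := by
    have hscore' := hscore (bstar - bhat) g hg
    have hflip : ∑ i, g i * (bstar - bhat) i = -∑ i, g i * (bhat i - bstar i) := by
      simp only [Pi.sub_apply, ← Finset.sum_neg_distrib, ← mul_neg, neg_sub]
    rw [hflip, groupNorm12_sub_comm] at hscore'
    linarith [hg bhat, hmin bstar]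
  have hsupp' : ∀ j ∉ S, pairNorm p bstar j = 0 := fun j hj => by
    simp [pairNorm, hsupp j hj]
  have hdecomp := groupNorm12_sub_restrict_add_restrict_compl_le hp hsupp' bhat
  have hsplit := groupNorm12_eq_restrict_add_restrict_compl hp S (bhat - bstar)
  linarith [le_of_mul_le_mul_left hbasic hlam]
end

section
/- (Trace inequality for approximately sparse matrices) For any symmetric matrix M ∈ ℝ^{p×p}, any matrix u ∈ ℝ^{k×p}, and any s ∈ ℕ with s ≥ 1, trace(u M uᵀ) ≤ (‖u‖_F + ‖u‖_{1,F}/√s)² · ‖M‖_{S_s}, where ‖M‖_{S_s} = max{trace(a M bᵀ) : a, b ∈ ℝ^{k×p}, ‖a‖_F = ‖b‖_F = 1, a and b have at most s nonzero columns}, and ‖u‖_{1,F} is the sum of the Euclidean norms of the columns of u. -/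
open Finset Matrix

/-- Frobenius norm of a `k × p` real matrix. -/
noncomputable def frobNorm (k p : ℕ) (u : Matrix (Fin k) (Fin p) ℝ) : ℝ :=
  Real.sqrt (∑ i, ∑ j, (u i j) ^ 2)

/-- `‖u‖_{1,F}`: the sum of the Euclidean norms of the columns of `u`. -/
noncomputable def colSumNorm (k p : ℕ) (u : Matrix (Fin k) (Fin p) ℝ) : ℝ :=
  ∑ j, Real.sqrt (∑ i, (u i j) ^ 2)

/-- Number of nonzero columns of `u`. -/
noncomputable def colSupportCard (k p : ℕ) (u : Matrix (Fin k) (Fin p) ℝ) : ℕ :=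
  (univ.filter (fun j => ∃ i, u i j ≠ 0)).card

/-- The `s`-sparse spectral-type norm
`‖M‖_{S_s} = sup {trace (a M bᵀ) : ‖a‖_F = ‖b‖_F = 1, a, b have ≤ s nonzero columns}`. -/
noncomputable def sparseOpNorm (k p s : ℕ) (M : Matrix (Fin p) (Fin p) ℝ) : ℝ :=
  sSup {t : ℝ | ∃ a b : Matrix (Fin k) (Fin p) ℝ,
    frobNorm k p a = 1 ∧ frobNorm k p b = 1 ∧
    colSupportCard k p a ≤ s ∧ colSupportCard k p b ≤ s ∧
    t = Matrix.trace (a * M * bᵀ)}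


/-!
Sort the columns of `u` by decreasing Euclidean norm and cut them into consecutive blocks
`T₀, T₁, …` of `s` columns. Then `u = ∑ₗ u_{Tₗ}` with every `u_{Tₗ}` having at most `s` nonzero
columns, and since `trace (a M bᵀ) ≤ ‖a‖_F ‖b‖_F ‖M‖_{S_s}` for such matrices (by homogeneity),
expanding `trace (u M uᵀ)` bilinearly bounds it by `(∑ₗ ‖u_{Tₗ}‖_F)² ‖M‖_{S_s}`.
Finally `‖u_{T₀}‖_F ≤ ‖u‖_F`, and every column of `T_{l+1}` is no longer than the average column
of `Tₗ`, so `‖u_{T_{l+1}}‖_F ≤ ‖u_{Tₗ}‖_{1,F} / √s`; summing over `l` gives `‖u‖_{1,F} / √s`.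
-/

attribute [local instance] Matrix.frobeniusNormedAddCommGroup Matrix.frobeniusNormedSpace

section Frobenius

variable {m n α : Type*} [Fintype m] [Fintype n]

theorem Matrix.frobenius_norm_entry_le [NormedAddCommGroup α] (A : Matrix m n α) (i : m)
    (j : n) : ‖A i j‖ ≤ ‖A‖ :=
  (PiLp.norm_apply_le (WithLp.toLp 2 (A i)) j).trans
    (PiLp.norm_apply_le (WithLp.toLp 2 fun i => WithLp.toLp 2 (A i)) i)

theorem Matrix.trace_le_card_mul_frobenius_norm (A : Matrix m m ℝ) :
    trace A ≤ Fintype.card m * ‖A‖ :=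
  calc trace A ≤ ∑ i, ‖A i i‖ := sum_le_sum fun i _ => Real.le_norm_self _
    _ ≤ ∑ _i : m, ‖A‖ := sum_le_sum fun i _ => A.frobenius_norm_entry_le i i
    _ = Fintype.card m * ‖A‖ := by simp

end Frobenius

section SparseOpNorm

variable {k p s : ℕ}

theorem frobNorm_eq_norm (u : Matrix (Fin k) (Fin p) ℝ) : frobNorm k p u = ‖u‖ := by
  simp [frobNorm, frobenius_norm_def, Real.sqrt_eq_rpow]

theorem colSupportCard_smul_le (c : ℝ) (u : Matrix (Fin k) (Fin p) ℝ) :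
    colSupportCard k p (c • u) ≤ colSupportCard k p u :=
  card_le_card fun j hj => by
    obtain ⟨i, hi⟩ := (mem_filter.mp hj).2
    exact mem_filter.mpr ⟨mem_univ j, i, right_ne_zero_of_mul hi⟩

theorem trace_le_sparseOpNorm (M : Matrix (Fin p) (Fin p) ℝ) {a b : Matrix (Fin k) (Fin p) ℝ}
    (ha : ‖a‖ = 1) (hb : ‖b‖ = 1) (has : colSupportCard k p a ≤ s)
    (hbs : colSupportCard k p b ≤ s) : trace (a * M * bᵀ) ≤ sparseOpNorm k p s M := by
  refine le_csSup ⟨k * ‖M‖, ?_⟩ ⟨a, b, by rwa [frobNorm_eq_norm], by rwa [frobNorm_eq_norm],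
    has, hbs, rfl⟩
  rintro _ ⟨a, b, ha, hb, -, -, rfl⟩
  rw [frobNorm_eq_norm] at ha hb
  calc trace (a * M * bᵀ) ≤ k * ‖a * M * bᵀ‖ := by
        simpa using (a * M * bᵀ).trace_le_card_mul_frobenius_norm
    _ ≤ k * (‖a‖ * ‖M‖ * ‖bᵀ‖) := by
        gcongr
        exact (frobenius_norm_mul _ _).trans (by gcongr; exact frobenius_norm_mul _ _)
    _ = k * ‖M‖ := by rw [frobenius_norm_transpose, ha, hb, one_mul, mul_one]

theorem sparseOpNorm_nonneg (M : Matrix (Fin p) (Fin p) ℝ) :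
    0 ≤ sparseOpNorm k p s M := by
  by_cases h : ∃ a b : Matrix (Fin k) (Fin p) ℝ, ‖a‖ = 1 ∧ ‖b‖ = 1 ∧
      colSupportCard k p a ≤ s ∧ colSupportCard k p b ≤ s
  · obtain ⟨a, b, ha, hb, has, hbs⟩ := h
    have hpos := trace_le_sparseOpNorm M ha hb has hbs
    have hneg := trace_le_sparseOpNorm M ha (b := -b) (by rwa [norm_neg]) has
      (by simpa using (colSupportCard_smul_le (-1) b).trans hbs)
    rw [transpose_neg, Matrix.mul_neg, trace_neg] at hneg
    linarith
  · refine Real.sSup_nonneg fun _ ⟨a, b, ha, hb, has, hbs, _⟩ => absurd ?_ h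
    rw [frobNorm_eq_norm] at ha hb
    exact ⟨a, b, ha, hb, has, hbs⟩

theorem trace_le_norm_mul_norm_mul_sparseOpNorm (M : Matrix (Fin p) (Fin p) ℝ)
    {a b : Matrix (Fin k) (Fin p) ℝ} (has : colSupportCard k p a ≤ s)
    (hbs : colSupportCard k p b ≤ s) :
    trace (a * M * bᵀ) ≤ ‖a‖ * ‖b‖ * sparseOpNorm k p s M := by
  rcases eq_or_ne a 0 with rfl | ha
  · simp
  rcases eq_or_ne b 0 with rfl | hb
  · simp
  have key := trace_le_sparseOpNorm M (norm_smul_inv_norm ha) (norm_smul_inv_norm hb)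
    ((colSupportCard_smul_le _ a).trans has) ((colSupportCard_smul_le _ b).trans hbs)
  simp only [transpose_smul, smul_mul, Matrix.mul_smul, trace_smul, smul_eq_mul] at key
  rw [← mul_assoc, ← mul_inv, inv_mul_le_iff₀ (by positivity)] at key
  simpa [mul_comm] using key

theorem trace_sum_mul_mul_transpose_sum_le {ι : Type*} (M : Matrix (Fin p) (Fin p) ℝ)
    (t : Finset ι) (v : ι → Matrix (Fin k) (Fin p) ℝ)
    (hv : ∀ l ∈ t, colSupportCard k p (v l) ≤ s) :
    trace ((∑ l ∈ t, v l) * M * (∑ l ∈ t, v l)ᵀ)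
      ≤ (∑ l ∈ t, ‖v l‖) ^ 2 * sparseOpNorm k p s M := by
  simp only [Matrix.sum_mul, transpose_sum, Matrix.mul_sum, trace_sum]
  rw [sum_comm]
  calc ∑ l ∈ t, ∑ m ∈ t, trace (v l * M * (v m)ᵀ)
      ≤ ∑ l ∈ t, ∑ m ∈ t, ‖v l‖ * ‖v m‖ * sparseOpNorm k p s M :=
        sum_le_sum fun l hl => sum_le_sum fun m hm =>
          trace_le_norm_mul_norm_mul_sparseOpNorm M (hv l hl) (hv m hm)
    _ = (∑ l ∈ t, ‖v l‖) ^ 2 * sparseOpNorm k p s M := by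
        rw [sq, sum_mul_sum, Finset.sum_mul]
        simp only [Finset.sum_mul]

end SparseOpNorm

section Columns

variable {k p : ℕ}

noncomputable def colNorm (u : Matrix (Fin k) (Fin p) ℝ) (j : Fin p) : ℝ :=
  √(∑ i, u i j ^ 2)

def colRestrict (u : Matrix (Fin k) (Fin p) ℝ) (T : Finset (Fin p)) :
    Matrix (Fin k) (Fin p) ℝ :=
  of fun i j => if j ∈ T then u i j else 0

theorem norm_colRestrict (u : Matrix (Fin k) (Fin p) ℝ) (T : Finset (Fin p)) :
    ‖colRestrict u T‖ = √(∑ j ∈ T, colNorm u j ^ 2) := by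
  rw [← frobNorm_eq_norm, frobNorm, sum_comm]
  simp [colRestrict, colNorm, ite_pow, Real.sq_sqrt, sum_nonneg, sq_nonneg]

theorem norm_eq_sqrt_sum_colNorm_sq (u : Matrix (Fin k) (Fin p) ℝ) :
    ‖u‖ = √(∑ j, colNorm u j ^ 2) := by
  have h := norm_colRestrict u univ
  rwa [show colRestrict u univ = u by ext; simp [colRestrict]] at h

theorem colSupportCard_colRestrict_le (u : Matrix (Fin k) (Fin p) ℝ) (T : Finset (Fin p)) :
    colSupportCard k p (colRestrict u T) ≤ T.card :=
  card_le_card fun j hj => by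
    obtain ⟨i, hi⟩ := (mem_filter.mp hj).2
    exact by_contra fun hjT => hi (if_neg hjT)

theorem sum_colRestrict_fiber {ι : Type*} [DecidableEq ι] (u : Matrix (Fin k) (Fin p) ℝ)
    (f : Fin p → ι) (t : Finset ι) (hf : ∀ j, f j ∈ t) :
    ∑ l ∈ t, colRestrict u {j | f j = l} = u := by
  ext i j
  simp [colRestrict, Matrix.sum_apply, hf]

end Columns

theorem Finset.sum_range_sum_Ico_mul {M : Type*} [AddCommMonoid M] (g : ℕ → M) (s n : ℕ) :
    ∑ l ∈ range n, ∑ m ∈ Ico (l * s) ((l + 1) * s), g m = ∑ m ∈ range (n * s), g m := by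
  induction n with
  | zero => simp
  | succ n ih =>
    rw [sum_range_succ, ih, sum_range_add_sum_Ico _ (Nat.mul_le_mul_right s n.le_succ)]

theorem Antitone.sqrt_sum_sq_Ico_le {s : ℕ} {g : ℕ → ℝ} (hg : Antitone g) (hg0 : 0 ≤ g) (hs : 0 < s)
    (l : ℕ) :
    √(∑ m ∈ Ico ((l + 1) * s) ((l + 2) * s), g m ^ 2)
      ≤ (∑ m ∈ Ico (l * s) ((l + 1) * s), g m) / √s := by
  set B := ∑ m ∈ Ico (l * s) ((l + 1) * s), g m
  have hB : 0 ≤ B := sum_nonneg fun m _ => hg0 m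
  have hcard (n : ℕ) : #(Ico (n * s) ((n + 1) * s)) = s := by
    rw [Nat.card_Ico, add_one_mul, Nat.add_sub_cancel_left]
  have hle : ∀ m ∈ Ico ((l + 1) * s) ((l + 2) * s), g m ≤ B / s := by
    intro m hm
    rw [le_div_iff₀ (by positivity), mul_comm, ← nsmul_eq_mul, ← hcard l]
    refine card_nsmul_le_sum _ _ _ fun m' hm' => hg ?_
    rw [mem_Ico] at hm hm'
    omega
  rw [Real.sqrt_le_left (by positivity), div_pow, Real.sq_sqrt (by positivity)]
  calc ∑ m ∈ Ico ((l + 1) * s) ((l + 2) * s), g m ^ 2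
      ≤ ∑ m ∈ Ico ((l + 1) * s) ((l + 2) * s), (B / s) ^ 2 :=
        sum_le_sum fun m hm => pow_le_pow_left₀ (hg0 m) (hle m hm) 2
    _ = B ^ 2 / s := by
        rw [sum_const, hcard, nsmul_eq_mul]
        field_simp

section DecreasingRearrangement

variable {p s : ℕ}

noncomputable def sortDesc (x : Fin p → ℝ) : Equiv.Perm (Fin p) :=
  Tuple.sort (OrderDual.toDual ∘ x)

theorem antitone_comp_sortDesc (x : Fin p → ℝ) : Antitone (x ∘ sortDesc x) :=
  monotone_toDual_comp_iff.mp (Tuple.monotone_sort _)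

/-- Padded with zeros, so that the blocks `Ico (l * s) ((l + 1) * s)` may run past `p`. -/
noncomputable def decreasingRearrangement (x : Fin p → ℝ) (m : ℕ) : ℝ :=
  if h : m < p then x (sortDesc x ⟨m, h⟩) else 0

noncomputable def sortedRank (x : Fin p → ℝ) (j : Fin p) : ℕ :=
  (sortDesc x).symm j

noncomputable def sortedBlock (x : Fin p → ℝ) (s l : ℕ) : Finset (Fin p) :=
  {j | sortedRank x j / s = l}

variable {x : Fin p → ℝ}

theorem decreasingRearrangement_nonneg (hx : 0 ≤ x) : 0 ≤ decreasingRearrangement x := by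
  intro m
  unfold decreasingRearrangement
  split_ifs
  exacts [hx _, le_rfl]

theorem antitone_decreasingRearrangement (hx : 0 ≤ x) :
    Antitone (decreasingRearrangement x) := by
  intro m m' hm
  by_cases hm' : m' < p
  · simp only [decreasingRearrangement, dif_pos hm', dif_pos (hm.trans_lt hm')]
    exact antitone_comp_sortDesc x (show (⟨m, hm.trans_lt hm'⟩ : Fin p) ≤ ⟨m', hm'⟩ from hm)
  · rw [decreasingRearrangement, dif_neg hm']
    exact decreasingRearrangement_nonneg hx m

theorem decreasingRearrangement_sortedRank (x : Fin p → ℝ) (j : Fin p) :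
    decreasingRearrangement x (sortedRank x j) = x j := by
  simp [decreasingRearrangement, sortedRank]

theorem sum_range_decreasingRearrangement_le (hx : 0 ≤ x) (n : ℕ) :
    ∑ m ∈ range n, decreasingRearrangement x m ≤ ∑ j, x j := by
  have hsum : ∑ m ∈ range p, decreasingRearrangement x m = ∑ j, x j := by
    rw [← Fin.sum_univ_eq_sum_range]
    simp only [decreasingRearrangement, Fin.is_lt, dif_pos]
    exact Equiv.sum_comp _ x
  rw [← hsum, ← sum_filter_of_ne (p := (· < p)) fun m _ hm => by
    by_contra h; exact hm (dif_neg h)]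
  refine sum_le_sum_of_subset_of_nonneg (fun m hm => ?_) fun m _ _ =>
    decreasingRearrangement_nonneg hx m
  simpa using (mem_filter.mp hm).2

theorem sortedRank_injective (x : Fin p → ℝ) : Function.Injective (sortedRank x) :=
  Fin.val_injective.comp (Equiv.injective _)

theorem image_sortedRank_sortedBlock_subset (hs : 0 < s) (x : Fin p → ℝ) (l : ℕ) :
    (sortedBlock x s l).image (sortedRank x) ⊆ Ico (l * s) ((l + 1) * s) := by
  intro m hm
  obtain ⟨j, hj, rfl⟩ := mem_image.mp hm
  have := (Nat.div_eq_iff hs).mp (mem_filter.mp hj).2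
  rw [mem_Ico, add_one_mul]
  omega

theorem card_sortedBlock_le (hs : 0 < s) (x : Fin p → ℝ) (l : ℕ) : #(sortedBlock x s l) ≤ s := by
  rw [← card_image_of_injective _ (sortedRank_injective x)]
  refine (card_le_card (image_sortedRank_sortedBlock_subset hs x l)).trans_eq ?_
  rw [Nat.card_Ico, add_one_mul, Nat.add_sub_cancel_left]

theorem sum_sq_sortedBlock_le (hs : 0 < s) (x : Fin p → ℝ) (l : ℕ) :
    ∑ j ∈ sortedBlock x s l, x j ^ 2
      ≤ ∑ m ∈ Ico (l * s) ((l + 1) * s), decreasingRearrangement x m ^ 2 := by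
  simp_rw [← decreasingRearrangement_sortedRank x]
  rw [← sum_image (f := fun m => decreasingRearrangement x m ^ 2) (sortedRank_injective x).injOn]
  exact sum_le_sum_of_subset_of_nonneg (image_sortedRank_sortedBlock_subset hs x l)
    fun _ _ _ => sq_nonneg _

theorem sum_sqrt_sum_sq_sortedBlock_le (hx : 0 ≤ x) (hs : 0 < s) (n : ℕ) :
    ∑ l ∈ range n, √(∑ j ∈ sortedBlock x s l, x j ^ 2)
      ≤ √(∑ j, x j ^ 2) + (∑ j, x j) / √s := by
  cases n with
  | zero =>
    rw [sum_range_zero]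
    exact add_nonneg (Real.sqrt_nonneg _)
      (div_nonneg (sum_nonneg fun j _ => hx j) (Real.sqrt_nonneg _))
  | succ n =>
    set g := decreasingRearrangement x
    rw [sum_range_succ', add_comm]
    refine add_le_add (Real.sqrt_le_sqrt (sum_le_sum_of_subset_of_nonneg (subset_univ _)
      fun _ _ _ => sq_nonneg _)) ?_
    calc ∑ l ∈ range n, √(∑ j ∈ sortedBlock x s (l + 1), x j ^ 2)
        ≤ ∑ l ∈ range n, (∑ m ∈ Ico (l * s) ((l + 1) * s), g m) / √s :=
          sum_le_sum fun l _ => (Real.sqrt_le_sqrt (sum_sq_sortedBlock_le hs x (l + 1))).trans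
            ((antitone_decreasingRearrangement hx).sqrt_sum_sq_Ico_le
              (decreasingRearrangement_nonneg hx) hs l)
      _ ≤ (∑ j, x j) / √s := by
          rw [← sum_div, sum_range_sum_Ico_mul]
          gcongr
          exact sum_range_decreasingRearrangement_le hx _

end DecreasingRearrangement

theorem trace_sparse_decomposition_bound_general (k p s : ℕ) (hs : 1 ≤ s)
    (M : Matrix (Fin p) (Fin p) ℝ)
    (u : Matrix (Fin k) (Fin p) ℝ) :
    Matrix.trace (u * M * uᵀ)
      ≤ (frobNorm k p u + colSumNorm k p u / Real.sqrt s) ^ 2 * sparseOpNorm k p s M := by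
  set T := sortedBlock (colNorm u) s
  have hu : ∑ l ∈ range p, colRestrict u (T l) = u :=
    sum_colRestrict_fiber u _ _ fun j =>
      mem_range.mpr ((Nat.div_le_self _ s).trans_lt (Fin.is_lt _))
  have hnorms : ∑ l ∈ range p, ‖colRestrict u (T l)‖ ≤ frobNorm k p u + colSumNorm k p u / √s := by
    simp only [norm_colRestrict]
    rw [frobNorm_eq_norm, norm_eq_sqrt_sum_colNorm_sq]
    exact sum_sqrt_sum_sq_sortedBlock_le (fun j => Real.sqrt_nonneg _) hs p
  conv_lhs => rw [← hu]
  refine (trace_sum_mul_mul_transpose_sum_le M _ _ fun l _ =>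
    (colSupportCard_colRestrict_le u _).trans (card_sortedBlock_le hs _ l)).trans ?_
  gcongr
  exact sparseOpNorm_nonneg M

/-- Trace inequality for approximately sparse matrices:
`trace (u M uᵀ) ≤ (‖u‖_F + ‖u‖_{1,F}/√s)² ‖M‖_{S_s}`. -/
theorem trace_sparse_decomposition_bound (k p s : ℕ) (hs : 1 ≤ s)
    (M : Matrix (Fin p) (Fin p) ℝ) (hM : M.IsSymm)
    (u : Matrix (Fin k) (Fin p) ℝ) :
    Matrix.trace (u * M * uᵀ)
      ≤ (frobNorm k p u + colSumNorm k p u / Real.sqrt s) ^ 2 * sparseOpNorm k p s M :=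
  trace_sparse_decomposition_bound_general k p s hs M u
end

section
/- (Thresholding preserves rate and gains sparsity) Let b̂, b* ∈ ℝ^{2p} with group support of b* of size at most s, and let λ > 0. Define b̂^λ by zeroing each group pair (b̂_j, b̂_{j+p}) whose Euclidean norm is at most λ. Then ‖b̂^λ - b*‖_{1,2} ≤ csλ + ‖b̂ - b*‖_{1,2} for a constant c depending only on the support size, and the number of nonzero groups of b̂^λ is at most 2cs + ‖b̂ - b*‖_{1,2}/λ. -/
open Finset

/-- Group support of `b`: the set of indices `j` whose pair `(b_j, b_{j+p})`
is nonzero. -/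
noncomputable def groupSupport (p : ℕ) (b : Fin (2 * p) → ℝ) : Finset (Fin p) :=
  univ.filter (fun j => b ⟨j.1, by have := j.2; omega⟩ ≠ 0 ∨
    b ⟨j.1 + p, by have := j.2; omega⟩ ≠ 0)

/-- Hard group-thresholding at level `lam`: each pair `(b_j, b_{j+p})` with
`b_j² + b_{j+p}² ≤ lam²` is set to zero. -/
noncomputable def groupThreshold (p : ℕ) (hp : 0 < p) (lam : ℝ)
    (b : Fin (2 * p) → ℝ) : Fin (2 * p) → ℝ :=
  fun i =>
    if (b ⟨i.1 % p, by have := Nat.mod_lt i.1 hp; omega⟩) ^ 2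
        + (b ⟨i.1 % p + p, by have := Nat.mod_lt i.1 hp; omega⟩) ^ 2 > lam ^ 2
    then b i else 0

/-!
Group thresholding acts on each group `(b_j, b_{j+p}) ∈ ℝ²` as the hard threshold
`v ↦ v · 1{‖v‖ > λ}`, so everything reduces to one vector `v` and its target `w`.
If `v` is killed then `‖v‖ ≤ λ`, so its error grows by at most `λ`, and not at all when `w = 0`.
If `v` survives while `w = 0`, its error `‖v - w‖ = ‖v‖` exceeds `λ`, so there are at most
`‖b̂ - b*‖_{1,2} / λ` such groups.
-/

section HardThreshold

variable {E : Type*} [SeminormedAddCommGroup E]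

noncomputable def hardThreshold (lam : ℝ) (v : E) : E :=
  if lam < ‖v‖ then v else 0

theorem norm_hardThreshold_sub_le [DecidableEq E] {lam : ℝ} (hlam : 0 ≤ lam) (v w : E) :
    ‖hardThreshold lam v - w‖ ≤ (if w = 0 then 0 else lam) + ‖v - w‖ := by
  unfold hardThreshold
  by_cases hw : w = 0
  · rw [hw, if_pos rfl]
    split_ifs <;> simp
  · rw [if_neg hw]
    split_ifs with hv
    · linarith [norm_nonneg (v - w)]
    · rw [zero_sub, norm_neg]
      linarith [norm_le_norm_add_norm_sub v w, not_lt.mp hv]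

theorem lt_norm_sub_of_hardThreshold_ne_zero {lam : ℝ} {v w : E}
    (hv : hardThreshold lam v ≠ 0) (hw : w = 0) : lam < ‖v - w‖ := by
  unfold hardThreshold at hv
  rw [hw, sub_zero]
  by_contra h
  exact hv (if_neg h)

variable {ι : Type*} [Fintype ι] [DecidableEq E]

theorem sum_norm_hardThreshold_sub_le {lam : ℝ} (hlam : 0 ≤ lam) (v w : ι → E) :
    ∑ i, ‖hardThreshold lam (v i) - w i‖
      ≤ #{i | w i ≠ 0} * lam + ∑ i, ‖v i - w i‖ := by
  calc ∑ i, ‖hardThreshold lam (v i) - w i‖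
      ≤ ∑ i, ((if w i = 0 then 0 else lam) + ‖v i - w i‖) :=
        sum_le_sum fun i _ => norm_hardThreshold_sub_le hlam (v i) (w i)
    _ = #{i | w i ≠ 0} * lam + ∑ i, ‖v i - w i‖ := by
        rw [sum_add_distrib, sum_ite, sum_const_zero, zero_add, sum_const, nsmul_eq_mul]

theorem card_hardThreshold_ne_zero_le [DecidableEq ι] {lam : ℝ} (hlam : 0 < lam) (v w : ι → E) :
    (#{i | hardThreshold lam (v i) ≠ 0} : ℝ)
      ≤ #{i | w i ≠ 0} + (∑ i, ‖v i - w i‖) / lam := by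
  set T : Finset ι := {i | hardThreshold lam (v i) ≠ 0}
  set S : Finset ι := {i | w i ≠ 0}
  have hout : #(T \ S) * lam ≤ ∑ i, ‖v i - w i‖ :=
    calc #(T \ S) * lam = ∑ _i ∈ T \ S, lam := by rw [sum_const, nsmul_eq_mul]
      _ ≤ ∑ i ∈ T \ S, ‖v i - w i‖ := sum_le_sum fun i hi => by
          simp only [T, S, mem_sdiff, mem_filter, mem_univ, true_and, not_not] at hi
          exact (lt_norm_sub_of_hardThreshold_ne_zero hi.1 hi.2).le
      _ ≤ ∑ i, ‖v i - w i‖ :=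
          sum_le_sum_of_subset_of_nonneg (subset_univ _) fun i _ _ => norm_nonneg _
  have hsplit : (#T : ℝ) ≤ #(T \ S) + #S := by exact_mod_cast card_le_card_sdiff_add_card
  have hout' := (le_div_iff₀ hlam).mpr hout
  linarith

end HardThreshold

noncomputable def groupPair (p : ℕ) (b : Fin (2 * p) → ℝ) (j : Fin p) : EuclideanSpace ℝ (Fin 2) :=
  !₂[b ⟨j.1, by omega⟩, b ⟨j.1 + p, by omega⟩]

theorem norm_groupPair (p : ℕ) (b : Fin (2 * p) → ℝ) (j : Fin p) :
    ‖groupPair p b j‖ = √(b ⟨j.1, by omega⟩ ^ 2 + b ⟨j.1 + p, by omega⟩ ^ 2) := by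
  simp [groupPair, EuclideanSpace.norm_eq, Fin.sum_univ_two]

theorem groupNorm12_eq_sum_norm_groupPair (p : ℕ) (b : Fin (2 * p) → ℝ) :
    groupNorm12 p b = ∑ j, ‖groupPair p b j‖ := by
  simp only [norm_groupPair, groupNorm12]

theorem groupPair_sub (p : ℕ) (a b : Fin (2 * p) → ℝ) (j : Fin p) :
    groupPair p (a - b) j = groupPair p a j - groupPair p b j := by
  ext i; fin_cases i <;> simp [groupPair]

theorem groupSupport_eq_filter_groupPair_ne_zero (p : ℕ) (b : Fin (2 * p) → ℝ) :
    groupSupport p b = ({j | groupPair p b j ≠ 0} : Finset (Fin p)) := by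
  ext j; simp [groupSupport, groupPair, or_iff_not_and_not]

theorem groupThreshold_apply (p : ℕ) (hp : 0 < p) {lam : ℝ} (hlam : 0 ≤ lam)
    (b : Fin (2 * p) → ℝ) (i : Fin (2 * p)) (j : Fin p) (hij : i.1 % p = j.1) :
    groupThreshold p hp lam b i = if lam < ‖groupPair p b j‖ then b i else 0 := by
  simp only [groupThreshold, hij, gt_iff_lt, norm_groupPair, Real.lt_sqrt hlam]

theorem groupPair_groupThreshold (p : ℕ) (hp : 0 < p) {lam : ℝ} (hlam : 0 ≤ lam)
    (b : Fin (2 * p) → ℝ) (j : Fin p) :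
    groupPair p (groupThreshold p hp lam b) j = hardThreshold lam (groupPair p b j) := by
  have hlow := groupThreshold_apply p hp hlam b ⟨j.1, by omega⟩ j (Nat.mod_eq_of_lt j.2)
  have hhigh := groupThreshold_apply p hp hlam b ⟨j.1 + p, by omega⟩ j
    (by simp [Nat.mod_eq_of_lt j.2])
  unfold hardThreshold
  split_ifs at hlow hhigh ⊢ <;> ext i <;> fin_cases i <;> simp [groupPair, hlow, hhigh]

/-- Thresholding preserves the rate and gains sparsity: if `b*` has at most
`c·s` nonzero groups, then `‖b̂^λ - b*‖_{1,2} ≤ c s λ + ‖b̂ - b*‖_{1,2}` and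
`b̂^λ` has at most `2 c s + ‖b̂ - b*‖_{1,2}/λ` nonzero groups. -/
theorem group_threshold_rate_and_sparsity (p : ℕ) (hp : 0 < p)
    (bhat bstar : Fin (2 * p) → ℝ) (lam : ℝ) (hlam : 0 < lam)
    (c s : ℕ) (hsupp : (groupSupport p bstar).card ≤ c * s) :
    groupNorm12 p (groupThreshold p hp lam bhat - bstar)
        ≤ (c * s : ℝ) * lam + groupNorm12 p (bhat - bstar) ∧
    ((groupSupport p (groupThreshold p hp lam bhat)).card : ℝ)
        ≤ 2 * (c * s : ℝ) + groupNorm12 p (bhat - bstar) / lam := by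
  have hsupp' : (#{j | groupPair p bstar j ≠ 0} : ℝ) ≤ c * s := by
    rw [← groupSupport_eq_filter_groupPair_ne_zero]
    exact_mod_cast hsupp
  simp only [groupNorm12_eq_sum_norm_groupPair, groupSupport_eq_filter_groupPair_ne_zero,
    groupPair_sub, groupPair_groupThreshold p hp hlam.le]
  refine ⟨(sum_norm_hardThreshold_sub_le hlam.le _ _).trans (by gcongr), ?_⟩
  have hcard := card_hardThreshold_ne_zero_le hlam (groupPair p bhat) (groupPair p bstar)
  have hcs : (0 : ℝ) ≤ c * s := by positivity
  linarith
end

section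
/- (Self-normalized bound for nonnegative bounded sums) Let W₁,…,W_n be independent nonnegative random variables with Wᵢ ≤ cᵢ almost surely and E[Wᵢ] ≤ mᵢ. Set S = Σᵢ Wᵢ, a = 2Σᵢ mᵢ, b = (Σᵢ cᵢ²)^{1/2}, and V² = Σᵢ Wᵢ². If P(S ≥ a) ≤ 1/4 and P(V² ≥ b²) ≤ 1/4 (the latter automatic since V² ≤ b²), then for all x > 0, P(S ≥ x(a + b + V)) ≤ 2e^{-x²/2}. -/
/-!
Since `E S ≤ a / 2` and each `Wᵢ` ranges in `[0, cᵢ]`, Hoeffding's inequality gives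
`P(S ≥ x (a + b)) ≤ exp (-2 (x (a + b) - a / 2)² / b²) ≤ exp (-2 x²)` once `x ≥ 1 / 2`, and the
event `S ≥ x (a + b + V)` is smaller. For `x ≤ 1` the bound `2 e^{-x²/2}` exceeds `1`. When
`b = 0` the sum `S` vanishes almost surely, so `P(S ≥ a) ≤ 1/4` forces `a > 0` and the event is null.
-/

open MeasureTheory ProbabilityTheory

namespace ProbabilityTheory

variable {Ω ι : Type*} {mΩ : MeasurableSpace Ω} {μ : Measure Ω}

lemma pos_of_measure_le_lt_one [IsProbabilityMeasure μ] {Y : Ω → ℝ} (hY : ∀ᵐ ω ∂μ, 0 ≤ Y ω)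
    {a : ℝ} (h : μ {ω | a ≤ Y ω} < 1) : 0 < a := by
  by_contra! ha
  refine h.ne ?_
  rw [← measure_univ (μ := μ)]
  exact measure_congr (Filter.eventuallyEq_univ.2 (hY.mono fun ω hω ↦ ha.trans hω))

lemma measure_sum_ge_eq_zero {X : ι → Ω → ℝ} {c : ι → ℝ} (hc : ∀ i, ∀ᵐ ω ∂μ, X i ω ≤ c i)
    (s : Finset ι) {t : ℝ} (ht : ∑ i ∈ s, c i < t) :
    μ {ω | t ≤ ∑ i ∈ s, X i ω} = 0 := by
  have hle : ∀ᵐ ω ∂μ, ∑ i ∈ s, X i ω ≤ ∑ i ∈ s, c i := by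
    filter_upwards [(Filter.eventually_all_finset s).2 fun i _ ↦ hc i] with ω hω
    exact Finset.sum_le_sum hω
  rw [ae_iff] at hle
  refine measure_mono_null ?_ hle
  intro ω (hω : t ≤ ∑ i ∈ s, X i ω) hω'
  exact (hω.trans hω').not_gt ht

section Hoeffding

variable [IsProbabilityMeasure μ] {X : ι → Ω → ℝ} {c m : ι → ℝ}

lemma measureReal_sum_ge_le_of_nonneg_of_le (hX : ∀ i, Measurable (X i))
    (hindep : iIndepFun X μ) (h0 : ∀ i, ∀ᵐ ω ∂μ, 0 ≤ X i ω) (hc : ∀ i, ∀ᵐ ω ∂μ, X i ω ≤ c i)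
    (hm : ∀ i, μ[X i] ≤ m i) (s : Finset ι) {t : ℝ} (ht : ∑ i ∈ s, m i ≤ t) :
    μ.real {ω | t ≤ ∑ i ∈ s, X i ω} ≤
      Real.exp (-2 * (t - ∑ i ∈ s, m i) ^ 2 / ∑ i ∈ s, c i ^ 2) := by
  have hsubG : ∀ i ∈ s, HasSubgaussianMGF (fun ω ↦ X i ω - μ[X i]) ((‖c i - 0‖₊ / 2) ^ 2) μ :=
    fun i _ ↦ hasSubgaussianMGF_of_mem_Icc (hX i).aemeasurable
      (by filter_upwards [h0 i, hc i] with ω h0 hc using ⟨h0, hc⟩)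
  have hindep' : iIndepFun (fun i ω ↦ X i ω - μ[X i]) μ :=
    hindep.comp (fun i (y : ℝ) ↦ y - ∫ ω, X i ω ∂μ) fun _ ↦ measurable_sub_const _
  have hsub : {ω | t ≤ ∑ i ∈ s, X i ω} ⊆
      {ω | t - ∑ i ∈ s, m i ≤ ∑ i ∈ s, (X i ω - μ[X i])} :=
    Set.ofPred_subset_ofPred.2 fun ω hω ↦ by
      rw [Finset.sum_sub_distrib]
      linarith [Finset.sum_le_sum fun i (_ : i ∈ s) ↦ hm i]
  have hparam : ((∑ i ∈ s, (‖c i - 0‖₊ / 2) ^ 2 : NNReal) : ℝ) = (∑ i ∈ s, c i ^ 2) / 4 := by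
    push_cast
    norm_num [Finset.sum_div, div_pow]
  calc μ.real _ ≤ μ.real {ω | t - ∑ i ∈ s, m i ≤ ∑ i ∈ s, (X i ω - μ[X i])} :=
        measureReal_mono hsub
    _ ≤ _ := HasSubgaussianMGF.measure_sum_ge_le_of_iIndepFun hindep' hsubG (sub_nonneg.2 ht)
    _ = _ := by rw [hparam]; congr 1; ring

lemma measureReal_sum_ge_mul_add_le (hX : ∀ i, Measurable (X i)) (hindep : iIndepFun X μ)
    (h0 : ∀ i, ∀ᵐ ω ∂μ, 0 ≤ X i ω) (hc : ∀ i, ∀ᵐ ω ∂μ, X i ω ≤ c i) (hm : ∀ i, μ[X i] ≤ m i)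
    (s : Finset ι) {a b x : ℝ} (ha : 2 * ∑ i ∈ s, m i ≤ a) (hb : b ^ 2 = ∑ i ∈ s, c i ^ 2)
    (hb0 : 0 < b) (hx : 1 / 2 ≤ x) :
    μ.real {ω | x * (a + b) ≤ ∑ i ∈ s, X i ω} ≤ Real.exp (-2 * x ^ 2) := by
  have hm0 : 0 ≤ ∑ i ∈ s, m i :=
    Finset.sum_nonneg fun i _ ↦ (integral_nonneg_of_ae (h0 i)).trans (hm i)
  have hxb : 0 ≤ x * b := by positivity
  have hmargin : x * b ≤ x * (a + b) - ∑ i ∈ s, m i := by nlinarith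
  calc μ.real _ ≤ Real.exp (-2 * (x * (a + b) - ∑ i ∈ s, m i) ^ 2 / b ^ 2) := by
        rw [hb]
        exact measureReal_sum_ge_le_of_nonneg_of_le hX hindep h0 hc hm s (by linarith)
    _ ≤ Real.exp (-2 * x ^ 2) := by
        refine Real.exp_le_exp.2 ?_
        rw [div_le_iff₀ (by positivity)]
        nlinarith [mul_le_mul hmargin hmargin hxb (hxb.trans hmargin)]

end Hoeffding

end ProbabilityTheory

/-- Self-normalized bound for sums of independent nonnegative bounded random
variables: with `S = Σᵢ Wᵢ`, `a = 2 Σᵢ mᵢ`, `b = (Σᵢ cᵢ²)^{1/2}`,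
`V² = Σᵢ Wᵢ²`, if `P(S ≥ a) ≤ 1/4` then
`P(S ≥ x(a + b + V)) ≤ 2 e^{-x²/2}` for all `x > 0`. -/
theorem self_normalized_nonneg_bound
    {Ω : Type*} [MeasureSpace Ω] [IsProbabilityMeasure (ℙ : Measure Ω)]
    {n : ℕ} (W : Fin n → Ω → ℝ) (hmeas : ∀ i, Measurable (W i))
    (hindep : iIndepFun W ℙ)
    (c m : Fin n → ℝ)
    (hnonneg : ∀ i, ∀ᵐ ω ∂ℙ, 0 ≤ W i ω)
    (hbdd : ∀ i, ∀ᵐ ω ∂ℙ, W i ω ≤ c i)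
    (hmean : ∀ i, (∫ ω, W i ω) ≤ m i)
    (a b : ℝ)
    (ha : a = 2 * ∑ i, m i)
    (hb : b = Real.sqrt (∑ i, (c i) ^ 2))
    (hS : ℙ {ω | a ≤ ∑ i, W i ω} ≤ ENNReal.ofReal (1 / 4)) :
    ∀ x : ℝ, 0 < x →
      ℙ {ω | x * (a + b + Real.sqrt (∑ i, (W i ω) ^ 2)) ≤ ∑ i, W i ω}
        ≤ ENNReal.ofReal (2 * Real.exp (-x ^ 2 / 2)) := by
  intro x hx
  have ha0 : 0 < a := by
    refine pos_of_measure_le_lt_one ?_ (hS.trans_lt (by norm_num))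
    filter_upwards [ae_all_iff.2 hnonneg] with ω hω using Finset.sum_nonneg fun i _ ↦ hω i
  have hsub : {ω | x * (a + b + Real.sqrt (∑ i, (W i ω) ^ 2)) ≤ ∑ i, W i ω} ⊆
      {ω | x * (a + b) ≤ ∑ i, W i ω} := Set.ofPred_subset_ofPred.2 fun ω hω ↦ by
    nlinarith [Real.sqrt_nonneg (∑ i, (W i ω) ^ 2)]
  refine (measure_mono hsub).trans ?_
  rcases le_total x 1 with hx1 | hx1
  · exact prob_le_one.trans (ENNReal.one_le_ofReal.2 (by
      nlinarith [Real.add_one_le_exp (-x ^ 2 / 2)]))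
  rcases (hb ▸ Real.sqrt_nonneg _ : 0 ≤ b).eq_or_lt with hb0 | hb0
  · have hsq : ∑ i, c i ^ 2 = 0 := (Real.sqrt_eq_zero (by positivity)).1 (by rw [← hb, hb0])
    have hc : ∀ i, c i = 0 := fun i ↦ pow_eq_zero_iff two_ne_zero |>.1 <|
      (Finset.sum_eq_zero_iff_of_nonneg fun i _ ↦ sq_nonneg (c i)).1 hsq i (Finset.mem_univ i)
    rw [measure_sum_ge_eq_zero hbdd _ (by simp [hc, ← hb0]; positivity)]
    exact zero_le
  rw [← ofReal_measureReal]
  refine ENNReal.ofReal_le_ofReal ?_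
  calc (ℙ : Measure Ω).real {ω | x * (a + b) ≤ ∑ i, W i ω} ≤ Real.exp (-2 * x ^ 2) :=
        measureReal_sum_ge_mul_add_le hmeas hindep hnonneg hbdd hmean _ ha.ge
          (by rw [hb, Real.sq_sqrt (by positivity)]) hb0 (by linarith)
    _ ≤ Real.exp (-x ^ 2 / 2) := Real.exp_le_exp.2 (by nlinarith)
    _ ≤ 2 * Real.exp (-x ^ 2 / 2) := by linarith [Real.exp_pos (-x ^ 2 / 2)]
end
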